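/- Let G be the group of isometries of R³ generated by the screw motion S(x,y,z) = (−y, x, z+1/4) and the translations (x,y,z) ↦ (x+1,y,z), (x,y,z) ↦ (x,y+1,z). Then G acts freely on R³, and S⁴ is the translation by (0,0,1). -/

import Mathlib

/-- The translation of `ℝ³` by a vector `v`. -/
noncomputable def transBy (v : ℝ × ℝ × ℝ) : Equiv.Perm (ℝ × ℝ × ℝ) where
  toFun p := (p.1 + v.1, p.2.1 + v.2.1, p.2.2 + v.2.2)
  invFun p := (p.1 - v.1, p.2.1 - v.2.1, p.2.2 - v.2.2)
  left_inv p := by obtain ⟨x, y, z⟩ := p; simp [Prod.ext_iff]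
  right_inv p := by obtain ⟨x, y, z⟩ := p; simp [Prod.ext_iff]

/-- The quarter-turn screw motion `S : (x,y,z) ↦ (-y, x, z+1/4)` generating
the tetracosm space group (international no. 76, `P4₁`). -/
noncomputable def tetraS : Equiv.Perm (ℝ × ℝ × ℝ) where
  toFun p := (-p.2.1, p.1, p.2.2 + 1/4)
  invFun p := (p.2.1, -p.1, p.2.2 - 1/4)
  left_inv p := by obtain ⟨x, y, z⟩ := p; simp [Prod.ext_iff]
  right_inv p := by obtain ⟨x, y, z⟩ := p; simp [Prod.ext_iff]

/-- The tetracosm space group, generated by the screw motion `S` and the horizontal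
unit translations. -/
noncomputable def tetraGroup : Subgroup (Equiv.Perm (ℝ × ℝ × ℝ)) :=
  Subgroup.closure {tetraS, transBy (1, 0, 0), transBy (0, 1, 0)}

/-
Conjugation by `S` rotates a horizontal translation by a quarter turn, so `S` normalizes the
lattice of integral horizontal translations and every element of the group has the form
`t * S ^ k` with `t` in that lattice. Such an element raises the height by `k / 4`, so a fixed
point forces `k = 0`, and a translation with a fixed point is the identity.
-/

@[simp]
lemma transBy_apply (v p : ℝ × ℝ × ℝ) :
    transBy v p = (p.1 + v.1, p.2.1 + v.2.1, p.2.2 + v.2.2) := rfl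

@[simp]
lemma tetraS_apply (p : ℝ × ℝ × ℝ) : tetraS p = (-p.2.1, p.1, p.2.2 + 1/4) := rfl

@[simp]
lemma tetraS_inv_apply (p : ℝ × ℝ × ℝ) : tetraS⁻¹ p = (p.2.1, -p.1, p.2.2 - 1/4) := rfl

lemma transBy_add (v w : ℝ × ℝ × ℝ) : transBy (v + w) = transBy v * transBy w := by
  ext p <;> simp <;> ring

lemma transBy_zero : transBy 0 = 1 := by
  ext p <;> simp

lemma eq_zero_of_transBy_apply_eq_self {v p : ℝ × ℝ × ℝ} (h : transBy v p = p) : v = 0 := by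
  simp only [transBy_apply, Prod.ext_iff, add_eq_left] at h
  exact Prod.ext h.1 (Prod.ext h.2.1 h.2.2)

lemma tetraS_mul_transBy_mul_inv (v : ℝ × ℝ × ℝ) :
    tetraS * transBy v * tetraS⁻¹ = transBy (-v.2.1, v.1, v.2.2) := by
  ext p <;>
    simp only [Equiv.Perm.mul_apply, tetraS_inv_apply, transBy_apply, tetraS_apply] <;> ring

lemma tetraS_zpow_apply_snd_snd (k : ℤ) (p : ℝ × ℝ × ℝ) :
    ((tetraS ^ k) p).2.2 = p.2.2 + k / 4 := by
  induction k using Int.induction_on generalizing p with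
  | zero => simp
  | succ k ih =>
    rw [zpow_add_one, Equiv.Perm.mul_apply, ih, tetraS_apply]
    push_cast; ring
  | pred k ih =>
    rw [zpow_sub_one, Equiv.Perm.mul_apply, ih, tetraS_inv_apply]
    push_cast; ring

lemma tetraS_pow_four : tetraS ^ 4 = transBy (0, 0, 1) := by
  ext p <;> simp [pow_succ]; ring

def horizontalLattice : Subgroup (Equiv.Perm (ℝ × ℝ × ℝ)) where
  carrier := {g | ∃ a b : ℤ, g = transBy (a, b, 0)}
  one_mem' := ⟨0, 0, by simp [Prod.mk_zero_zero, transBy_zero]⟩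
  mul_mem' := by
    rintro _ _ ⟨a, b, rfl⟩ ⟨c, d, rfl⟩
    exact ⟨a + c, b + d, by rw [← transBy_add]; simp⟩
  inv_mem' := by
    rintro _ ⟨a, b, rfl⟩
    refine ⟨-a, -b, ?_⟩
    rw [inv_eq_iff_mul_eq_one, ← transBy_add]
    simp [Prod.mk_zero_zero, transBy_zero]

lemma tetraS_mem_normalizer_horizontalLattice :
    tetraS ∈ Subgroup.normalizer (horizontalLattice : Set _) := by
  refine Subgroup.mem_normalizer_iff.mpr fun g => ⟨?_, ?_⟩
  · rintro ⟨a, b, rfl⟩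
    exact ⟨-b, a, by rw [tetraS_mul_transBy_mul_inv]; simp⟩
  · rintro ⟨c, d, hg⟩
    refine ⟨d, -c, (MulAut.conj tetraS).injective ?_⟩
    rw [MulAut.conj_apply, MulAut.conj_apply, hg, tetraS_mul_transBy_mul_inv]
    simp

lemma tetraGroup_le_horizontalLattice_sup_zpowers :
    tetraGroup ≤ horizontalLattice ⊔ Subgroup.zpowers tetraS := by
  rw [tetraGroup, Subgroup.closure_le]
  rintro g (rfl | rfl | rfl)
  · exact Subgroup.mem_sup_right (Subgroup.mem_zpowers _)
  · exact Subgroup.mem_sup_left ⟨1, 0, by simp⟩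
  · exact Subgroup.mem_sup_left ⟨0, 1, by simp⟩

lemma exists_eq_transBy_mul_zpow_of_mem_tetraGroup {g : Equiv.Perm (ℝ × ℝ × ℝ)}
    (hg : g ∈ tetraGroup) : ∃ a b k : ℤ, g = transBy (a, b, 0) * tetraS ^ k := by
  have hle : Subgroup.zpowers tetraS ≤ Subgroup.normalizer (horizontalLattice : Set _) :=
    (Subgroup.zpowers_le).mpr tetraS_mem_normalizer_horizontalLattice
  have hmem : g ∈ ((horizontalLattice ⊔ Subgroup.zpowers tetraS : Subgroup _) : Set _) :=
    tetraGroup_le_horizontalLattice_sup_zpowers hg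
  rw [Subgroup.coe_mul_of_right_le_normalizer_left _ _ hle] at hmem
  obtain ⟨_, ⟨a, b, rfl⟩, _, ⟨k, rfl⟩, rfl⟩ := hmem
  exact ⟨a, b, k, rfl⟩

theorem tetraGroup_acts_freely :
    (∀ g ∈ tetraGroup, ∀ p : ℝ × ℝ × ℝ, g p = p → g = 1) ∧
    tetraS ^ 4 = transBy (0, 0, 1) := by
  refine ⟨fun g hg p hfix => ?_, tetraS_pow_four⟩
  obtain ⟨a, b, k, rfl⟩ := exists_eq_transBy_mul_zpow_of_mem_tetraGroup hg
  have hk : k = 0 := by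
    have hz := congrArg (fun q => q.2.2) hfix
    simp only [Equiv.Perm.mul_apply, transBy_apply, tetraS_zpow_apply_snd_snd] at hz
    exact_mod_cast (by linarith : (k : ℝ) = 0)
  subst hk
  rw [zpow_zero, mul_one] at hfix ⊢
  rw [eq_zero_of_transBy_apply_eq_self hfix, transBy_zero]
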